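/- arXiv:2008.02936 — 2 statements merged into one kernel-verified Lean document; each statement's English description precedes it below -/
import Mathlib

section
/- Disjunctive termination argument: let R be a transition relation on S and suppose the transitive closure of R is contained in the union T₁ ∪ ⋯ ∪ Tₙ of finitely many relations, each of which is well-founded (when viewed with arguments in the 'decreasing' orientation). Then R itself admits no infinite trace. -/
private lemma wf_no_chain {α : Type*} {r : α → α → Prop} (h : WellFounded r)
    (f : ℕ → α) (hf : ∀ n, r (f (n + 1)) (f n)) : False := by
  obtain ⟨a, ⟨n, rfl⟩, hmin⟩ := h.has_min (Set.range f) ⟨f 0, ⟨0, rfl⟩⟩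
  exact hmin (f (n + 1)) ⟨n + 1, rfl⟩ (hf n)

private lemma build_seq (U : Ultrafilter ℕ) (hIoi : ∀ x : ℕ, Set.Ioi x ∈ U)
    (K : Set ℕ) (hK : K ∈ U) (Q : ℕ → Set ℕ) (hQ : ∀ i ∈ K, Q i ∈ U) :
    ∃ g : ℕ → ℕ, (∀ n, g n < g (n + 1)) ∧ (∀ n, g (n + 1) ∈ Q (g n)) := by
  classical
  have hA : ∀ x ∈ K, ((K ∩ Q x) ∩ Set.Ioi x).Nonempty :=
    fun x hx => Ultrafilter.nonempty_of_mem
      (Filter.inter_mem (Filter.inter_mem hK (hQ x hx)) (hIoi x))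
  let step : {x // x ∈ K} → {x // x ∈ K} := fun p =>
    ⟨(hA p.1 p.2).some, (hA p.1 p.2).some_mem.1.1⟩
  let g' : ℕ → {x // x ∈ K} := fun n => step^[n] ⟨(Ultrafilter.nonempty_of_mem hK).some,
    (Ultrafilter.nonempty_of_mem hK).some_mem⟩
  have hstep : ∀ n, g' (n + 1) = step (g' n) := fun n =>
    Function.iterate_succ_apply' _ _ _
  refine ⟨fun n => (g' n).1, fun n => ?_, fun n => ?_⟩
  · show ((g' n : ℕ)) < (g' (n + 1) : ℕ)
    rw [hstep n]
    exact (hA (g' n).1 (g' n).2).some_mem.2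
  · show ((g' (n + 1) : ℕ)) ∈ Q (g' n : ℕ)
    rw [hstep n]
    exact (hA (g' n).1 (g' n).2).some_mem.1.2

theorem disjunctive_termination
    {S : Type*} (R T₁ T₂ : S → S → Prop)
    (hcover : ∀ s s', Relation.TransGen R s s' → T₁ s s' ∨ T₂ s s')
    (hwf₁ : WellFounded (fun a b => T₁ b a))
    (hwf₂ : WellFounded (fun a b => T₂ b a)) :
    ¬ ∃ s : ℕ → S, ∀ i, R (s i) (s (i + 1)) := by
  classical
  rintro ⟨s, hs⟩
  have htc : ∀ i j : ℕ, i < j → Relation.TransGen R (s i) (s j) := by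
    intro i j hij
    induction j with
    | zero => omega
    | succ j ih =>
      rcases Nat.lt_succ_iff_lt_or_eq.mp hij with h | h
      · exact (ih h).tail (hs j)
      · subst h; exact Relation.TransGen.single (hs i)
  set U : Ultrafilter ℕ := Filter.hyperfilter ℕ with hU
  have hIoi : ∀ x : ℕ, Set.Ioi x ∈ U := fun x => by
    have := Filter.compl_mem_hyperfilter_of_finite (Set.finite_Iic x)
    rwa [Set.compl_Iic] at this
  set c : ℕ → Prop := fun i => {j | T₁ (s i) (s j)} ∈ U with hc
  rcases U.mem_or_compl_mem {i | c i} with hJ | hJ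
  · obtain ⟨g, hmono, hgQ⟩ := build_seq U hIoi {i | c i} hJ
      (fun i => {i' | c i'} ∩ {j | T₁ (s i) (s j)})
      (fun i hi => Filter.inter_mem hJ hi)
    exact wf_no_chain hwf₁ (fun n => s (g n)) (fun n => (hgQ n).2)
  · obtain ⟨g, hmono, hgQ⟩ := build_seq U hIoi {i | c i}ᶜ hJ
      (fun i => {i | c i}ᶜ ∩ {j | T₁ (s i) (s j)}ᶜ)
      (fun i hi => Filter.inter_mem hJ (Ultrafilter.compl_mem_iff_notMem.mpr hi))
    refine wf_no_chain hwf₂ (fun n => s (g n)) (fun n => ?_)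
    rcases hcover _ _ (htc (g n) (g (n + 1)) (hmono n)) with h | h
    · exact absurd h (hgQ n).2
    · exact h
end

section
/- McCarthy's 91 function, defined by f(n) = n - 10 if n > 100 and f(n) = f(f(n+11)) otherwise, is total on ℕ, and satisfies f(n) = 91 for all n ≤ 100 and f(n) = n - 10 for n > 100. -/
theorem mccarthy91 :
    ∃ f : ℕ → ℕ,
      (∀ n, f n = if n > 100 then n - 10 else f (f (n + 11))) ∧
      (∀ n, n ≤ 100 → f n = 91) ∧
      (∀ n, n > 100 → f n = n - 10) := by
  refine ⟨fun n => if n > 100 then n - 10 else 91, fun n => ?_, fun n h => by simp [Nat.not_lt.2 h], fun n h => by simp [h]⟩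
  by_cases h : n > 100
  · simp [h]
  · simp only [h, if_false]
    by_cases h2 : n + 11 > 100
    · simp only [h2, if_true]
      split <;> omega
    · simp [h2]
end
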